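/- Let X, Y be jointly Gaussian standard normal random variables with correlation r ∈ [0,1). Then P(X > u, Y > u) ≤ exp(−u²/(1+r)) for all u ≥ 0, up to a constant: specifically P(X > u, Y > u) ≤ (1+r)² / (u²·2π√(1−r²)) · exp(−u²/(1+r)) for u > 0. -/

import Mathlib

/-!
Since `r (x - y)^2 ≥ 0`, the exponent of the bivariate density dominates
`(x^2 + y^2) / (2(1+r))`, so the density is at most `C e^{-b x^2} e^{-b y^2}` with
`b = 1/(2(1+r))` and `C = 1/(2π√(1-r^2))`. The integral of this product over the quadrant
is the square of the one-dimensional tail `∫_u^∞ e^{-b x^2} dx`, which is at most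
`e^{-b u^2}/(2bu)` after inserting the factor `x/u ≥ 1`.
-/

open MeasureTheory ProbabilityTheory Set Real Filter Topology

theorem integral_Ioi_mul_exp_neg_mul_sq {b : ℝ} (hb : 0 < b) (u : ℝ) :
    ∫ x in Ioi u, x * exp (-b * x ^ 2) = exp (-b * u ^ 2) / (2 * b) := by
  have hderiv : ∀ x ∈ Ici u, HasDerivAt (fun x => -(2 * b)⁻¹ * exp (-b * x ^ 2))
      (x * exp (-b * x ^ 2)) x := fun x _ =>
    (((hasDerivAt_pow 2 x).const_mul (-b)).exp.const_mul _).congr_deriv (by field_simp; ring)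
  have hlim : Tendsto (fun x => -(2 * b)⁻¹ * exp (-b * x ^ 2)) atTop (𝓝 (-(2 * b)⁻¹ * 0)) :=
    (tendsto_exp_atBot.comp ((tendsto_pow_atTop two_ne_zero).const_mul_atTop_of_neg
      (neg_lt_zero.2 hb))).const_mul _
  rw [integral_Ioi_of_hasDerivAt_of_tendsto' hderiv
    (integrable_mul_exp_neg_mul_sq hb).integrableOn hlim]
  field_simp
  ring

theorem lintegral_Ioi_exp_neg_mul_sq_le {b u : ℝ} (hb : 0 < b) (hu : 0 < u) :
    ∫⁻ x in Ioi u, ENNReal.ofReal (exp (-b * x ^ 2))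
      ≤ ENNReal.ofReal (exp (-b * u ^ 2) / (2 * b * u)) := by
  calc ∫⁻ x in Ioi u, ENNReal.ofReal (exp (-b * x ^ 2))
      ≤ ∫⁻ x in Ioi u, ENNReal.ofReal (u⁻¹ * (x * exp (-b * x ^ 2))) := by
        refine setLIntegral_mono (by fun_prop) fun x hx => ENNReal.ofReal_le_ofReal ?_
        rw [← mul_assoc]
        exact le_mul_of_one_le_left (exp_pos _).le ((one_le_inv_mul₀ hu).2 (le_of_lt hx))
    _ = ENNReal.ofReal (u⁻¹ * ∫ x in Ioi u, x * exp (-b * x ^ 2)) := by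
        rw [← integral_const_mul, ofReal_integral_eq_lintegral_ofReal]
        · exact (integrable_mul_exp_neg_mul_sq hb).integrableOn.const_mul _
        · filter_upwards [ae_restrict_mem measurableSet_Ioi] with x hx
          have := hu.trans hx
          positivity
    _ = ENNReal.ofReal (exp (-b * u ^ 2) / (2 * b * u)) := by
        rw [integral_Ioi_mul_exp_neg_mul_sq hb]
        congr 1
        field_simp

theorem lintegral_Ioi_prod_Ioi_exp_neg_mul_sq_le {b u : ℝ} (hb : 0 < b) (hu : 0 < u) :
    ∫⁻ p in Ioi u ×ˢ Ioi u, ENNReal.ofReal (exp (-b * p.1 ^ 2) * exp (-b * p.2 ^ 2))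
      ≤ ENNReal.ofReal (exp (-b * u ^ 2) / (2 * b * u)) ^ 2 := by
  simp_rw [ENNReal.ofReal_mul (exp_pos _).le]
  rw [Measure.volume_eq_prod, ← Measure.prod_restrict,
    lintegral_prod_mul (f := fun x => ENNReal.ofReal (exp (-b * x ^ 2)))
      (g := fun x => ENNReal.ofReal (exp (-b * x ^ 2))) (by fun_prop) (by fun_prop), sq]
  gcongr <;> exact lintegral_Ioi_exp_neg_mul_sq_le hb hu

theorem exp_neg_bivariate_exponent_le {r : ℝ} (hr0 : 0 ≤ r) (hr1 : r < 1) (x y : ℝ) :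
    exp (-(x ^ 2 - 2 * r * x * y + y ^ 2) / (2 * (1 - r ^ 2)))
      ≤ exp (-(2 * (1 + r))⁻¹ * x ^ 2) * exp (-(2 * (1 + r))⁻¹ * y ^ 2) := by
  have h1r : 0 < 1 - r := by linarith
  rw [← exp_add, exp_le_exp, show 1 - r ^ 2 = (1 + r) * (1 - r) by ring]
  field_simp
  nlinarith [mul_nonneg hr0 (sq_nonneg (x - y))]

theorem withDensity_bivariate_normal_quadrant_le {r u : ℝ} (hr0 : 0 ≤ r) (hr1 : r < 1)
    (hu : 0 < u) :
    (volume : Measure (ℝ × ℝ)).withDensity (fun p => ENNReal.ofReal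
        ((2 * π * √(1 - r ^ 2))⁻¹ *
          exp (-(p.1 ^ 2 - 2 * r * p.1 * p.2 + p.2 ^ 2) / (2 * (1 - r ^ 2)))))
        (Ioi u ×ˢ Ioi u)
      ≤ ENNReal.ofReal (2 * π * √(1 - r ^ 2))⁻¹ *
          ENNReal.ofReal (exp (-(2 * (1 + r))⁻¹ * u ^ 2) / (2 * (2 * (1 + r))⁻¹ * u)) ^ 2 := by
  set b := (2 * (1 + r))⁻¹
  have hb : 0 < b := inv_pos.2 (by linarith)
  rw [withDensity_apply _ (measurableSet_Ioi.prod measurableSet_Ioi)]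
  calc _ ≤ ∫⁻ p in Ioi u ×ˢ Ioi u, ENNReal.ofReal (2 * π * √(1 - r ^ 2))⁻¹ *
          ENNReal.ofReal (exp (-b * p.1 ^ 2) * exp (-b * p.2 ^ 2)) :=
        lintegral_mono fun p => by
          rw [← ENNReal.ofReal_mul (by positivity)]
          gcongr
          exact exp_neg_bivariate_exponent_le hr0 hr1 p.1 p.2
    _ = ENNReal.ofReal (2 * π * √(1 - r ^ 2))⁻¹ * ∫⁻ p in Ioi u ×ˢ Ioi u,
          ENNReal.ofReal (exp (-b * p.1 ^ 2) * exp (-b * p.2 ^ 2)) :=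
        lintegral_const_mul' _ _ ENNReal.ofReal_ne_top
    _ ≤ _ := by gcongr; exact lintegral_Ioi_prod_Ioi_exp_neg_mul_sq_le hb hu

/-- If `(X, Y)` is a centered bivariate Gaussian vector with unit
variances and correlation `r ∈ [0,1)` (expressed via its joint density with
respect to Lebesgue measure on `ℝ²`), then for `u > 0`,
`P(X > u, Y > u) ≤ (1+r)² / (u²·2π√(1−r²)) · exp(−u²/(1+r))`. -/
theorem stmt_13 {Ω : Type*} [MeasureSpace Ω] [IsProbabilityMeasure (ℙ : Measure Ω)]
    (X Y : Ω → ℝ) (hXY : Measurable fun ω => (X ω, Y ω))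
    (r : ℝ) (hr0 : 0 ≤ r) (hr1 : r < 1)
    (hlaw : Measure.map (fun ω => (X ω, Y ω)) ℙ
      = (volume : Measure (ℝ × ℝ)).withDensity (fun p => ENNReal.ofReal
          ((2 * π * Real.sqrt (1 - r ^ 2))⁻¹ *
            Real.exp (-(p.1 ^ 2 - 2 * r * p.1 * p.2 + p.2 ^ 2) / (2 * (1 - r ^ 2))))))
    (u : ℝ) (hu : 0 < u) :
    (ℙ {ω | u < X ω ∧ u < Y ω}).toReal
      ≤ (1 + r) ^ 2 / (u ^ 2 * (2 * π) * Real.sqrt (1 - r ^ 2)) *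
          Real.exp (-u ^ 2 / (1 + r)) := by
  have h1r : 0 < 1 + r := by linarith
  have hsqrt : 0 < √(1 - r ^ 2) := sqrt_pos.2 (by nlinarith)
  have hbound := withDensity_bivariate_normal_quadrant_le hr0 hr1 hu
  rw [← hlaw, Measure.map_apply hXY (measurableSet_Ioi.prod measurableSet_Ioi)] at hbound
  have hexp : exp (-(2 * (1 + r))⁻¹ * u ^ 2) ^ 2 = exp (-u ^ 2 / (1 + r)) := by
    rw [← exp_nat_mul]
    congr 1
    field_simp
    ring
  have hrhs : (2 * π * √(1 - r ^ 2))⁻¹ *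
        (exp (-(2 * (1 + r))⁻¹ * u ^ 2) / (2 * (2 * (1 + r))⁻¹ * u)) ^ 2
      = (1 + r) ^ 2 / (u ^ 2 * (2 * π) * √(1 - r ^ 2)) * exp (-u ^ 2 / (1 + r)) := by
    rw [div_pow, hexp]
    field_simp
  refine ENNReal.toReal_le_of_le_ofReal (by positivity) ?_
  rw [← hrhs, ENNReal.ofReal_mul (by positivity), ENNReal.ofReal_pow (by positivity)]
  exact hbound
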